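/- arXiv:2307.07232 — 7 statements merged into one kernel-verified Lean document; each statement's English description precedes it below -/
import Mathlib

section
/- For the tangent line family to the sine curve, the discriminant set D = {(X,Y) ∈ ℝ² : ∃ t, F(X,Y,t) = 0 and ∂F/∂t(X,Y,t) = 0}, where F(X,Y,t) = -X cos t + Y + t cos t - sin t, equals the union of the sine curve {Y = sin X} with the lines {Y = X - 2kπ : k ∈ ℤ} and {Y = -X + (2k+1)π : k ∈ ℤ}; in particular D strictly contains the sine curve. -/
/-! Since `∂F/∂t = (X - t) sin t`, a critical parameter is either `t = X`, where `F = 0` says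
`Y = sin X`, or `t = nπ`, where the tangent line is `Y = (-1)ⁿ (X - nπ)`; even and odd `n`
give the two families of lines. -/

open Real

noncomputable def Fsine (X Y t : ℝ) : ℝ :=
  -X * Real.cos t + Y + t * Real.cos t - Real.sin t

lemma Fsine_eq (X Y t : ℝ) : Fsine X Y t = Y - sin t - (X - t) * cos t := by
  unfold Fsine; ring

lemma hasDerivAt_Fsine (X Y t : ℝ) : HasDerivAt (Fsine X Y) ((X - t) * sin t) t := by
  have h : HasDerivAt (fun s => Y - sin s - (X - s) * cos s)
      (-cos t - (-1 * cos t + (X - t) * -sin t)) t :=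
    ((hasDerivAt_sin t).const_sub Y).sub (((hasDerivAt_id' t).const_sub X).mul (hasDerivAt_cos t))
  rw [show Fsine X Y = _ from funext (Fsine_eq X Y)]
  exact h.congr_deriv (by ring)

lemma exists_Fsine_eq_zero_and_deriv_eq_zero_iff (X Y : ℝ) :
    (∃ t, Fsine X Y t = 0 ∧ deriv (Fsine X Y) t = 0) ↔
      Y = sin X ∨ ∃ t, sin t = 0 ∧ Y = (X - t) * cos t := by
  simp only [(hasDerivAt_Fsine X Y _).deriv, Fsine_eq, mul_eq_zero, sub_eq_zero]
  constructor
  · rintro ⟨t, hF, rfl | hs⟩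
    · exact Or.inl (by linarith)
    · exact Or.inr ⟨t, hs, by rw [hs] at hF; linarith⟩
  · rintro (rfl | ⟨t, hs, rfl⟩)
    · exact ⟨X, by ring, Or.inl rfl⟩
    · exact ⟨t, by rw [hs]; ring, Or.inr hs⟩

lemma exists_sin_eq_zero_and_eq_sub_mul_cos_iff (X Y : ℝ) :
    (∃ t, sin t = 0 ∧ Y = (X - t) * cos t) ↔
      (∃ k : ℤ, Y = X - 2 * k * π) ∨ ∃ k : ℤ, Y = -X + (2 * k + 1) * π := by
  constructor
  · rintro ⟨t, hs, rfl⟩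
    obtain ⟨n, rfl⟩ := sin_eq_zero_iff.1 hs
    rw [cos_int_mul_pi]
    rcases n.even_or_odd' with ⟨k, rfl | rfl⟩
    · exact Or.inl ⟨k, by rw [(even_two_mul k).neg_one_zpow]; push_cast; ring⟩
    · exact Or.inr ⟨k, by rw [(odd_two_mul_add_one k).neg_one_zpow]; push_cast; ring⟩
  · rintro (⟨k, rfl⟩ | ⟨k, rfl⟩)
    · refine ⟨(2 * k : ℤ) * π, sin_int_mul_pi _, ?_⟩
      rw [cos_int_mul_pi, (even_two_mul k).neg_one_zpow]; push_cast; ring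
    · refine ⟨(2 * k + 1 : ℤ) * π, sin_int_mul_pi _, ?_⟩
      rw [cos_int_mul_pi, (odd_two_mul_add_one k).neg_one_zpow]; push_cast; ring

/-- The discriminant set of the tangent line family of the sine curve equals
the union of the sine curve with the lines `Y = X - 2kπ` and `Y = -X + (2k+1)π`;
in particular it strictly contains the sine curve. -/
theorem discriminant_of_sine_tangent_family :
    {p : ℝ × ℝ | ∃ t : ℝ, Fsine p.1 p.2 t = 0 ∧ deriv (Fsine p.1 p.2) t = 0} =
      {p : ℝ × ℝ | (∃ k : ℤ, p.2 = p.1 - 2 * (k : ℝ) * Real.pi) ∨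
        (∃ k : ℤ, p.2 = -p.1 + (2 * (k : ℝ) + 1) * Real.pi) ∨
        p.2 = Real.sin p.1} ∧
    {p : ℝ × ℝ | p.2 = Real.sin p.1} ⊂
      {p : ℝ × ℝ | ∃ t : ℝ, Fsine p.1 p.2 t = 0 ∧ deriv (Fsine p.1 p.2) t = 0} := by
  have hD : {p : ℝ × ℝ | ∃ t : ℝ, Fsine p.1 p.2 t = 0 ∧ deriv (Fsine p.1 p.2) t = 0} =
      {p : ℝ × ℝ | (∃ k : ℤ, p.2 = p.1 - 2 * (k : ℝ) * Real.pi) ∨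
        (∃ k : ℤ, p.2 = -p.1 + (2 * (k : ℝ) + 1) * Real.pi) ∨ p.2 = Real.sin p.1} := by
    ext p
    rw [Set.mem_ofPred_eq, Set.mem_ofPred_eq, exists_Fsine_eq_zero_and_deriv_eq_zero_iff,
      exists_sin_eq_zero_and_eq_sub_mul_cos_iff, or_comm, or_assoc]
  refine ⟨hD, hD ▸ (Set.ssubset_iff_of_subset fun p hp => Or.inr (Or.inr hp)).2 ?_⟩
  refine ⟨(0, π), Or.inr (Or.inl ⟨0, by simp⟩), ?_⟩
  simp [pi_ne_zero]
end

section
/- With a(t) = (sin t - t cos t)/√(cos² t + 1) and θ(t) determined by (cos θ(t), sin θ(t)) = (-cos t, 1)/√(cos² t + 1), one has a'(t) = sin t (t + cos t sin t)/(cos² t + 1)^{3/2} and θ'(t) = -sin t/(cos² t + 1); consequently b(t) = -(t + cos t sin t)/√(cos² t + 1) satisfies a'(t) = b(t) θ'(t) for all t ∈ ℝ. -/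
open Real

/-- For the normalized tangent line family to the sine curve, with
`a(t) = (sin t - t cos t)/√(cos²t + 1)` and `θ` determined by
`(cos θ(t), sin θ(t)) = (-cos t, 1)/√(cos²t + 1)`, one has the stated formulas for
`a'` and `θ'`, and `b(t) = -(t + cos t sin t)/√(cos²t + 1)` is a creator. -/
theorem creator_for_sine_tangent_family
    (θ a b : ℝ → ℝ) (hθ : ContDiff ℝ (⊤ : ℕ∞) θ)
    (hcos : ∀ t, Real.cos (θ t) = -Real.cos t / Real.sqrt (Real.cos t ^ 2 + 1))
    (hsin : ∀ t, Real.sin (θ t) = 1 / Real.sqrt (Real.cos t ^ 2 + 1))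
    (ha : a = fun t => (Real.sin t - t * Real.cos t) / Real.sqrt (Real.cos t ^ 2 + 1))
    (hb : b = fun t => -(t + Real.cos t * Real.sin t) / Real.sqrt (Real.cos t ^ 2 + 1)) :
    ∀ t : ℝ,
      deriv a t = Real.sin t * (t + Real.cos t * Real.sin t) /
        (Real.cos t ^ 2 + 1) ^ ((3 : ℝ) / 2) ∧
      deriv θ t = -Real.sin t / (Real.cos t ^ 2 + 1) ∧
      deriv a t = b t * deriv θ t := by
  intro t
  have hs : (0:ℝ) < Real.cos t ^ 2 + 1 := by positivity
  have hv : (0:ℝ) < Real.sqrt (Real.cos t ^ 2 + 1) := Real.sqrt_pos.2 hs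
  have hvv : Real.sqrt (Real.cos t ^ 2 + 1) * Real.sqrt (Real.cos t ^ 2 + 1)
      = Real.cos t ^ 2 + 1 := Real.mul_self_sqrt hs.le
  -- rpow identity
  have h32 : (Real.cos t ^ 2 + 1) ^ ((3:ℝ)/2)
      = (Real.cos t ^ 2 + 1) * Real.sqrt (Real.cos t ^ 2 + 1) := by
    rw [show ((3:ℝ)/2) = 1 + (1/2 : ℝ) by norm_num, Real.rpow_add hs, Real.rpow_one,
      Real.sqrt_eq_rpow]
  have h32pos : (0:ℝ) < (Real.cos t ^ 2 + 1) ^ ((3:ℝ)/2) := by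
    rw [h32]; positivity
  -- derivative of the inner polynomial and of the square root
  have hw : HasDerivAt (fun t => Real.cos t ^ 2 + 1)
      (2 * Real.cos t ^ 1 * (-Real.sin t)) t :=
    ((Real.hasDerivAt_cos t).pow 2).add_const 1
  have hsq : HasDerivAt (fun t => Real.sqrt (Real.cos t ^ 2 + 1))
      ((2 * Real.cos t ^ 1 * (-Real.sin t)) / (2 * Real.sqrt (Real.cos t ^ 2 + 1))) t :=
    hw.sqrt hs.ne'
  -- derivative of a
  have hnum : HasDerivAt (fun t => Real.sin t - t * Real.cos t)
      (Real.cos t - (1 * Real.cos t + t * (-Real.sin t))) t :=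
    (Real.hasDerivAt_sin t).sub ((hasDerivAt_id t).mul (Real.hasDerivAt_cos t))
  have hA : HasDerivAt a
      (((Real.cos t - (1 * Real.cos t + t * (-Real.sin t))) * Real.sqrt (Real.cos t ^ 2 + 1)
        - (Real.sin t - t * Real.cos t) *
          ((2 * Real.cos t ^ 1 * (-Real.sin t)) / (2 * Real.sqrt (Real.cos t ^ 2 + 1))))
        / (Real.sqrt (Real.cos t ^ 2 + 1)) ^ 2) t := by
    rw [ha]; exact hnum.div hsq hv.ne'
  have hderiva : deriv a t = Real.sin t * (t + Real.cos t * Real.sin t) /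
      (Real.cos t ^ 2 + 1) ^ ((3:ℝ)/2) := by
    rw [hA.deriv, h32]
    field_simp
    linear_combination (Real.cos t ^ 2 * t * Real.sin t - Real.cos t * Real.sin t ^ 2) * hvv
  -- derivative of θ
  have hθd : HasDerivAt θ (deriv θ t) t :=
    ((hθ.differentiable (by simp)) t).hasDerivAt
  have hcomp : HasDerivAt (fun t => Real.cos (θ t))
      (-Real.sin (θ t) * deriv θ t) t :=
    (Real.hasDerivAt_cos (θ t)).comp t hθd
  have hg := ((Real.hasDerivAt_cos t).neg).div hsq hv.ne'
  have heqfun : (fun t => Real.cos (θ t))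
      = fun t => -Real.cos t / Real.sqrt (Real.cos t ^ 2 + 1) := funext hcos
  have hcomp' : HasDerivAt (fun t => -Real.cos t / Real.sqrt (Real.cos t ^ 2 + 1))
      (-Real.sin (θ t) * deriv θ t) t := heqfun ▸ hcomp
  have huniq := hcomp'.unique hg
  rw [hsin t] at huniq
  have hderivθ : deriv θ t = -Real.sin t / (Real.cos t ^ 2 + 1) := by
    have h1 := huniq
    rw [Real.sq_sqrt hs.le] at h1
    field_simp [hv.ne'] at h1
    have h2 : (deriv θ t * (Real.cos t ^ 2 + 1)) * (2 * Real.sqrt (Real.cos t ^ 2 + 1))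
        = (-Real.sin t) * (2 * Real.sqrt (Real.cos t ^ 2 + 1)) := by
      simp only [Pi.neg_apply] at h1
      linear_combination (-2 * Real.sqrt (Real.cos t ^ 2 + 1)) * h1 +
        (-2 * Real.sin t * Real.sqrt (Real.cos t ^ 2 + 1)) * hvv
    have h3 := mul_right_cancel₀
      (by positivity : (2 * Real.sqrt (Real.cos t ^ 2 + 1)) ≠ 0) h2
    rw [eq_div_iff hs.ne']
    exact h3
  refine ⟨hderiva, hderivθ, ?_⟩
  rw [hderiva, hderivθ, hb, h32]
  rw [div_mul_div_comm]
  rw [show Real.sqrt (Real.cos t ^ 2 + 1) * (Real.cos t ^ 2 + 1)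
      = (Real.cos t ^ 2 + 1) * Real.sqrt (Real.cos t ^ 2 + 1) from mul_comm _ _]
  congr 1
  ring
end

section
/- A straight line family L = {L_{(θ(t), a(t))}}_{t ∈ ℝ} in the plane creates an envelope if and only if it is creative, i.e., there exists a C^∞ function b : ℝ → ℝ with a'(t) = b(t) θ'(t) for all t ∈ ℝ. -/
open Real

/-- A straight line family `{X cos θ(t) + Y sin θ(t) = a(t)}` in the plane creates an
envelope if and only if it is creative, i.e. there is a C^∞ function `b` with
`a'(t) = b(t) θ'(t)` for all `t`. -/
theorem creates_envelope_iff_creative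
    (θ a : ℝ → ℝ) (hθ : ContDiff ℝ (⊤ : ℕ∞) θ) (ha : ContDiff ℝ (⊤ : ℕ∞) a) :
    (∃ f : ℝ → ℝ × ℝ, ContDiff ℝ (⊤ : ℕ∞) f ∧ ∀ t : ℝ,
        (deriv f t).1 * Real.cos (θ t) + (deriv f t).2 * Real.sin (θ t) = 0 ∧
        (f t).1 * Real.cos (θ t) + (f t).2 * Real.sin (θ t) = a t) ↔
    (∃ b : ℝ → ℝ, ContDiff ℝ (⊤ : ℕ∞) b ∧ ∀ t : ℝ, deriv a t = b t * deriv θ t) := by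
  have hcos : ContDiff ℝ (⊤ : ℕ∞) fun t => Real.cos (θ t) := Real.contDiff_cos.comp hθ
  have hsin : ContDiff ℝ (⊤ : ℕ∞) fun t => Real.sin (θ t) := Real.contDiff_sin.comp hθ
  constructor
  · rintro ⟨f, hf, hfe⟩
    refine ⟨fun t => -(f t).1 * Real.sin (θ t) + (f t).2 * Real.cos (θ t), ?_, fun t => ?_⟩
    · exact (((contDiff_fst.comp hf).neg.mul hsin).add ((contDiff_snd.comp hf).mul hcos))
    · have hθd : HasDerivAt θ (deriv θ t) t := (hθ.differentiable (by simp) t).hasDerivAt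
      have hfd : HasDerivAt f (deriv f t) t := (hf.differentiable (by simp) t).hasDerivAt
      have hc : HasDerivAt (fun t => Real.cos (θ t)) (-Real.sin (θ t) * deriv θ t) t :=
        (Real.hasDerivAt_cos (θ t)).comp t hθd
      have hs : HasDerivAt (fun t => Real.sin (θ t)) (Real.cos (θ t) * deriv θ t) t :=
        (Real.hasDerivAt_sin (θ t)).comp t hθd
      have H : HasDerivAt (fun t => (f t).1 * Real.cos (θ t) + (f t).2 * Real.sin (θ t))
          ((deriv f t).1 * Real.cos (θ t) + (f t).1 * (-Real.sin (θ t) * deriv θ t) +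
            ((deriv f t).2 * Real.sin (θ t) + (f t).2 * (Real.cos (θ t) * deriv θ t))) t :=
        by convert ((hfd.hasFDerivAt.fst.hasDerivAt).mul hc).add ((hfd.hasFDerivAt.snd.hasDerivAt).mul hs) using 1
           case e'_9 => simp
           all_goals rfl
      have heq : (fun t => (f t).1 * Real.cos (θ t) + (f t).2 * Real.sin (θ t)) = a :=
        funext fun t => (hfe t).2
      rw [heq] at H
      rw [H.deriv]
      linear_combination (hfe t).1
  · rintro ⟨b, hb, hab⟩
    refine ⟨fun t => (a t * Real.cos (θ t) - b t * Real.sin (θ t),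
        a t * Real.sin (θ t) + b t * Real.cos (θ t)), ?_, fun t => ?_⟩
    · exact ((ha.mul hcos).sub (hb.mul hsin)).prodMk ((ha.mul hsin).add (hb.mul hcos))
    · have hθd : HasDerivAt θ (deriv θ t) t := (hθ.differentiable (by simp) t).hasDerivAt
      have had : HasDerivAt a (deriv a t) t := (ha.differentiable (by simp) t).hasDerivAt
      have hbd : HasDerivAt b (deriv b t) t := (hb.differentiable (by simp) t).hasDerivAt
      have hc : HasDerivAt (fun t => Real.cos (θ t)) (-Real.sin (θ t) * deriv θ t) t :=
        (Real.hasDerivAt_cos (θ t)).comp t hθd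
      have hs : HasDerivAt (fun t => Real.sin (θ t)) (Real.cos (θ t) * deriv θ t) t :=
        (Real.hasDerivAt_sin (θ t)).comp t hθd
      have h1 : HasDerivAt (fun t => a t * Real.cos (θ t) - b t * Real.sin (θ t))
          ((deriv a t * Real.cos (θ t) + a t * (-Real.sin (θ t) * deriv θ t)) -
            (deriv b t * Real.sin (θ t) + b t * (Real.cos (θ t) * deriv θ t))) t :=
        (had.mul hc).sub (hbd.mul hs)
      have h2 : HasDerivAt (fun t => a t * Real.sin (θ t) + b t * Real.cos (θ t))
          ((deriv a t * Real.sin (θ t) + a t * (Real.cos (θ t) * deriv θ t)) +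
            (deriv b t * Real.cos (θ t) + b t * (-Real.sin (θ t) * deriv θ t))) t :=
        (had.mul hs).add (hbd.mul hc)
      have Hf := h1.prodMk h2
      rw [Hf.deriv]
      constructor
      · simp only
        linear_combination (Real.cos (θ t))^2 * hab t + (Real.sin (θ t))^2 * hab t
      · simp only
        linear_combination a t * Real.sin_sq_add_cos_sq (θ t)
end

section
/- If a straight line family L = {L_{(θ(t),a(t))}} in the plane is creative with creator b, then the map t ↦ a(t)(cos θ(t), sin θ(t)) + b(t)(-sin θ(t), cos θ(t)) is an envelope of L, i.e., it lies on L_{(θ(t),a(t))} and its derivative is orthogonal to ν(t) = (cos θ(t), sin θ(t)) for all t. -/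
open Real

/-- If a line family is creative with creator `b`, then
`t ↦ a(t)(cos θ(t), sin θ(t)) + b(t)(-sin θ(t), cos θ(t))` is an envelope of the family. -/
theorem representation_is_envelope
    (θ a b : ℝ → ℝ) (hθ : ContDiff ℝ (⊤ : ℕ∞) θ) (ha : ContDiff ℝ (⊤ : ℕ∞) a) (hb : ContDiff ℝ (⊤ : ℕ∞) b)
    (hcreator : ∀ t : ℝ, deriv a t = b t * deriv θ t)
    (f : ℝ → ℝ × ℝ)
    (hf : f = fun t => (a t * Real.cos (θ t) - b t * Real.sin (θ t),
                        a t * Real.sin (θ t) + b t * Real.cos (θ t))) :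
    ∀ t : ℝ,
      (f t).1 * Real.cos (θ t) + (f t).2 * Real.sin (θ t) = a t ∧
      (deriv f t).1 * Real.cos (θ t) + (deriv f t).2 * Real.sin (θ t) = 0 := by
  intro t
  have hθd : HasDerivAt θ (deriv θ t) t := (hθ.differentiable (by simp) t).hasDerivAt
  have had : HasDerivAt a (b t * deriv θ t) t := by
    have := (ha.differentiable (by simp) t).hasDerivAt
    rwa [hcreator t] at this
  have hbd : HasDerivAt b (deriv b t) t := (hb.differentiable (by simp) t).hasDerivAt
  have hcos : HasDerivAt (fun s => Real.cos (θ s)) (-Real.sin (θ t) * deriv θ t) t :=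
    (Real.hasDerivAt_cos (θ t)).comp t hθd
  have hsin : HasDerivAt (fun s => Real.sin (θ s)) (Real.cos (θ t) * deriv θ t) t :=
    (Real.hasDerivAt_sin (θ t)).comp t hθd
  have h1 : HasDerivAt (fun s => a s * Real.cos (θ s) - b s * Real.sin (θ s))
      ((b t * deriv θ t) * Real.cos (θ t) + a t * (-Real.sin (θ t) * deriv θ t)
        - (deriv b t * Real.sin (θ t) + b t * (Real.cos (θ t) * deriv θ t))) t :=
    (had.mul hcos).sub (hbd.mul hsin)
  have h2 : HasDerivAt (fun s => a s * Real.sin (θ s) + b s * Real.cos (θ s))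
      ((b t * deriv θ t) * Real.sin (θ t) + a t * (Real.cos (θ t) * deriv θ t)
        + (deriv b t * Real.cos (θ t) + b t * (-Real.sin (θ t) * deriv θ t))) t :=
    (had.mul hsin).add (hbd.mul hcos)
  have hfd : HasDerivAt f
      ((b t * deriv θ t) * Real.cos (θ t) + a t * (-Real.sin (θ t) * deriv θ t)
        - (deriv b t * Real.sin (θ t) + b t * (Real.cos (θ t) * deriv θ t)),
       (b t * deriv θ t) * Real.sin (θ t) + a t * (Real.cos (θ t) * deriv θ t)
        + (deriv b t * Real.cos (θ t) + b t * (-Real.sin (θ t) * deriv θ t))) t := by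
    rw [hf]; exact h1.prodMk h2
  rw [hfd.deriv, hf]
  have hpyth := Real.sin_sq_add_cos_sq (θ t)
  refine ⟨?_, ?_⟩
  · simp only []
    linear_combination a t * hpyth
  · simp only []
    linear_combination
end

section
/- Suppose a straight line family L = {L_{(θ(t),a(t))}} is creative and the set of regular points of the Gauss mapping (i.e., points t with θ'(t) ≠ 0) is dense in ℝ. Then the envelope of L is unique: any two C^∞ maps f, g : ℝ → ℝ² that are envelopes of L coincide. -/
open Real

/-- If a creative line family has a dense set of regular points of the Gauss map,
then its envelope is unique. -/
theorem envelope_unique_of_dense_regular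
    (θ a : ℝ → ℝ) (hθ : ContDiff ℝ (⊤ : ℕ∞) θ) (ha : ContDiff ℝ (⊤ : ℕ∞) a)
    (hcreative : ∃ b : ℝ → ℝ, ContDiff ℝ (⊤ : ℕ∞) b ∧ ∀ t : ℝ, deriv a t = b t * deriv θ t)
    (hdense : Dense {t : ℝ | deriv θ t ≠ 0})
    (f g : ℝ → ℝ × ℝ) (hf : ContDiff ℝ (⊤ : ℕ∞) f) (hg : ContDiff ℝ (⊤ : ℕ∞) g)
    (hfenv : ∀ t : ℝ,
      (deriv f t).1 * Real.cos (θ t) + (deriv f t).2 * Real.sin (θ t) = 0 ∧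
      (f t).1 * Real.cos (θ t) + (f t).2 * Real.sin (θ t) = a t)
    (hgenv : ∀ t : ℝ,
      (deriv g t).1 * Real.cos (θ t) + (deriv g t).2 * Real.sin (θ t) = 0 ∧
      (g t).1 * Real.cos (θ t) + (g t).2 * Real.sin (θ t) = a t) :
    f = g := by
  have hfd : Differentiable ℝ f := hf.differentiable (by simp)
  have hgd : Differentiable ℝ g := hg.differentiable (by simp)
  have hθd : Differentiable ℝ θ := hθ.differentiable (by simp)
  set u : ℝ → ℝ := fun t => (f t).1 - (g t).1 with hu_def
  set v : ℝ → ℝ := fun t => (f t).2 - (g t).2 with hv_def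
  set φ : ℝ → ℝ := fun t => u t * Real.cos (θ t) + v t * Real.sin (θ t) with hφ_def
  have hφ0 : ∀ t, φ t = 0 := by
    intro t
    have h1 := (hfenv t).2
    have h2 := (hgenv t).2
    simp only [hφ_def, hu_def, hv_def]
    ring_nf
    nlinarith [h1, h2]
  have hφeq : φ = fun _ => (0 : ℝ) := funext hφ0
  have key : ∀ t, deriv θ t ≠ 0 → f t = g t := by
    intro t ht
    -- derivatives of the components
    have hf1' : HasDerivAt (fun s => (f s).1) (deriv f t).1 t := by
      simpa using ((hfd t).hasDerivAt.hasFDerivAt.fst).hasDerivAt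
    have hg1' : HasDerivAt (fun s => (g s).1) (deriv g t).1 t := by
      simpa using ((hgd t).hasDerivAt.hasFDerivAt.fst).hasDerivAt
    have hf2' : HasDerivAt (fun s => (f s).2) (deriv f t).2 t := by
      simpa using ((hfd t).hasDerivAt.hasFDerivAt.snd).hasDerivAt
    have hg2' : HasDerivAt (fun s => (g s).2) (deriv g t).2 t := by
      simpa using ((hgd t).hasDerivAt.hasFDerivAt.snd).hasDerivAt
    have hu' : HasDerivAt u ((deriv f t).1 - (deriv g t).1) t := hf1'.sub hg1'
    have hv' : HasDerivAt v ((deriv f t).2 - (deriv g t).2) t := hf2'.sub hg2'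
    have hc : HasDerivAt (fun s => Real.cos (θ s)) (-Real.sin (θ t) * deriv θ t) t :=
      (hθd t).hasDerivAt.cos
    have hs : HasDerivAt (fun s => Real.sin (θ s)) (Real.cos (θ t) * deriv θ t) t :=
      (hθd t).hasDerivAt.sin
    have hφ' : HasDerivAt φ
        (((deriv f t).1 - (deriv g t).1) * Real.cos (θ t)
          + u t * (-Real.sin (θ t) * deriv θ t)
          + (((deriv f t).2 - (deriv g t).2) * Real.sin (θ t)
          + v t * (Real.cos (θ t) * deriv θ t))) t :=
      (hu'.mul hc).add (hv'.mul hs)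
    have hφ'' : HasDerivAt φ 0 t := by
      rw [hφeq]; exact hasDerivAt_const t 0
    have hder := hφ'.unique hφ''
    have hf1 := (hfenv t).1
    have hg1 := (hgenv t).1
    -- obtain v cos - u sin = 0
    have hperp : v t * Real.cos (θ t) - u t * Real.sin (θ t) = 0 := by
      have hmul : deriv θ t * (v t * Real.cos (θ t) - u t * Real.sin (θ t)) = 0 := by
        nlinarith [hder, hf1, hg1]
      rcases mul_eq_zero.mp hmul with h | h
      · exact absurd h ht
      · exact h
    have htan : u t * Real.cos (θ t) + v t * Real.sin (θ t) = 0 := hφ0 t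
    have hpyth := Real.sin_sq_add_cos_sq (θ t)
    have hu0 : u t = 0 := by linear_combination Real.cos (θ t) * htan - Real.sin (θ t) * hperp - u t * hpyth
    have hv0 : v t = 0 := by linear_combination Real.sin (θ t) * htan + Real.cos (θ t) * hperp - v t * hpyth
    have h1 : (f t).1 = (g t).1 := by
      have := hu0; simp only [hu_def] at this; linarith
    have h2 : (f t).2 = (g t).2 := by
      have := hv0; simp only [hv_def] at this; linarith
    exact Prod.ext h1 h2
  exact Continuous.ext_on hdense hf.continuous hg.continuous key
end

section
/- The evolute line family of the sine curve, given by normalized data (cos θ(t), sin θ(t)) = (1, cos t)/√(1 + cos² t) and a(t) = (t + cos t sin t)/√(1 + cos² t), satisfies a'(t) = cos t (3 cos t + cos³ t + t sin t)/(1 + cos² t)^{3/2} and θ'(t) = -sin t/(1 + cos² t). At t = kπ (k ∈ ℤ) one has θ'(kπ) = 0 but a'(kπ) ≠ 0; hence no creator exists and this affine normal line family creates no envelope (the evolute of the graph of Y = sin X does not exist). -/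
open Real


lemma spos (t : ℝ) : 0 < 1 + Real.cos t ^ 2 := by positivity

lemma sqpos (t : ℝ) : 0 < Real.sqrt (1 + Real.cos t ^ 2) := Real.sqrt_pos.2 (spos t)

lemma sq_sqrt' (t : ℝ) : Real.sqrt (1 + Real.cos t ^ 2) ^ 2 = 1 + Real.cos t ^ 2 :=
  Real.sq_sqrt (spos t).le

lemma sqrt_hd (t : ℝ) : HasDerivAt (fun t => Real.sqrt (1 + Real.cos t ^ 2))
    (-(Real.cos t * Real.sin t) / Real.sqrt (1 + Real.cos t ^ 2)) t := by
  have h1 : HasDerivAt (fun t => 1 + Real.cos t ^ 2)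
      (2 * Real.cos t ^ 1 * (-Real.sin t)) t :=
    (HasDerivAt.const_add 1 (((Real.hasDerivAt_cos t).pow 2)))
  have := (Real.hasDerivAt_sqrt (spos t).ne').comp t h1
  refine this.congr_deriv (Eq.symm ?_)
  have hs := (sqpos t).ne'
  field_simp

lemma a_hd (t : ℝ) : HasDerivAt (fun t => (t + Real.cos t * Real.sin t) / Real.sqrt (1 + Real.cos t ^ 2))
    (Real.cos t * (3 * Real.cos t + Real.cos t ^ 3 + t * Real.sin t) /
        (1 + Real.cos t ^ 2) ^ ((3 : ℝ) / 2)) t := by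
  have hnum : HasDerivAt (fun t => t + Real.cos t * Real.sin t)
      (1 + ((-Real.sin t) * Real.sin t + Real.cos t * Real.cos t)) t :=
    (hasDerivAt_id t).add ((Real.hasDerivAt_cos t).mul (Real.hasDerivAt_sin t))
  have := hnum.div (sqrt_hd t) (sqpos t).ne'
  refine this.congr_deriv (Eq.symm ?_)
  have hs := (sqpos t).ne'
  have hsq := sq_sqrt' t
  have h32 : (1 + Real.cos t ^ 2) ^ ((3 : ℝ) / 2) = Real.sqrt (1 + Real.cos t ^ 2) ^ 3 := by
    rw [show Real.sqrt (1 + Real.cos t ^ 2) = (1 + Real.cos t ^ 2) ^ ((1:ℝ)/2) from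
      (Real.rpow_natCast _ 2 ▸ Real.sqrt_eq_rpow _),
      ← Real.rpow_natCast ((1 + Real.cos t ^ 2) ^ ((1:ℝ)/2)) 3,
      ← Real.rpow_mul (spos t).le]
    norm_num
  rw [h32]
  have h1 : Real.sin t ^ 2 = 1 - Real.cos t ^ 2 := Real.sin_sq t
  field_simp
  linear_combination (-(Real.sqrt (1 + Real.cos t ^ 2)) * ((1 - Real.sin t ^ 2 + Real.cos t ^ 2) * Real.sqrt (1 + Real.cos t ^ 2) ^ 2 + (3 * Real.cos t ^ 2 + Real.cos t ^ 4 + t * Real.cos t * Real.sin t)) + (2 * Real.cos t ^ 2 * Real.sqrt (1 + Real.cos t ^ 2) ^ 3 + (3 * Real.cos t ^ 2 + Real.cos t ^ 4 + Real.cos t * t * Real.sin t) * Real.sqrt (1 + Real.cos t ^ 2) - 2 * Real.cos t ^ 2)) * hsq + ((Real.sqrt (1 + Real.cos t ^ 2) ^ 3) + (-Real.cos t ^ 2 + Real.cos t ^ 2 * Real.sqrt (1 + Real.cos t ^ 2) ^ 3 + Real.sqrt (1 + Real.cos t ^ 2) ^ 2 - Real.sqrt (1 + Real.cos t ^ 2)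 ^ 5)) * h1

lemma rhs_hd (t : ℝ) : HasDerivAt (fun t => Real.cos t / Real.sqrt (1 + Real.cos t ^ 2))
    (-Real.sin t / Real.sqrt (1 + Real.cos t ^ 2) ^ 3) t := by
  have := (Real.hasDerivAt_cos t).div (sqrt_hd t) (sqpos t).ne'
  refine this.congr_deriv (Eq.symm ?_)
  have hs := (sqpos t).ne'
  have hsq := sq_sqrt' t
  field_simp
  linear_combination (Real.sin t * Real.sqrt (1 + Real.cos t ^ 2) * (1 + Real.sqrt (1 + Real.cos t ^ 2) ^ 2) + Real.sin t * (1 - Real.sqrt (1 + Real.cos t ^ 2) - Real.sqrt (1 + Real.cos t ^ 2) ^ 3)) * hsq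

lemma theta_deriv (θ : ℝ → ℝ) (hθ : ContDiff ℝ (⊤ : ℕ∞) θ)
    (hcos : ∀ t, Real.cos (θ t) = 1 / Real.sqrt (1 + Real.cos t ^ 2))
    (hsin : ∀ t, Real.sin (θ t) = Real.cos t / Real.sqrt (1 + Real.cos t ^ 2)) (t : ℝ) :
    deriv θ t = -Real.sin t / (1 + Real.cos t ^ 2) := by
  have hd : HasDerivAt θ (deriv θ t) t :=
    ((hθ.differentiable (by simp)) t).hasDerivAt
  have h1 : HasDerivAt (fun t => Real.sin (θ t)) (Real.cos (θ t) * deriv θ t) t :=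
    (Real.hasDerivAt_sin (θ t)).comp t hd
  have h2 : (fun t => Real.sin (θ t)) = fun t => Real.cos t / Real.sqrt (1 + Real.cos t ^ 2) :=
    funext hsin
  rw [h2] at h1
  have heq := h1.unique (rhs_hd t)
  rw [hcos t] at heq
  have hs := (sqpos t).ne'
  have hsq := sq_sqrt' t
  have hD := (spos t).ne'
  field_simp at heq ⊢
  have h3 : deriv θ t * Real.sqrt (1 + Real.cos t ^ 2) ^ 2 = -Real.sin t :=
    mul_right_cancel₀ hs (by linear_combination Real.sqrt (1 + Real.cos t ^ 2) * heq)
  linear_combination h3 - deriv θ t * hsq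

/-- The affine normal line family (evolute family) of the sine curve, with normalized
data `(cos θ(t), sin θ(t)) = (1, cos t)/√(1 + cos² t)` and
`a(t) = (t + cos t sin t)/√(1 + cos² t)`, satisfies the stated derivative formulas;
at `t = kπ` one has `θ'(kπ) = 0` but `a'(kπ) ≠ 0`, hence no creator exists and the
family creates no envelope. -/
theorem sine_evolute_does_not_exist
    (θ a : ℝ → ℝ) (hθ : ContDiff ℝ (⊤ : ℕ∞) θ) (haC : ContDiff ℝ (⊤ : ℕ∞) a)
    (hcos : ∀ t, Real.cos (θ t) = 1 / Real.sqrt (1 + Real.cos t ^ 2))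
    (hsin : ∀ t, Real.sin (θ t) = Real.cos t / Real.sqrt (1 + Real.cos t ^ 2))
    (ha : a = fun t => (t + Real.cos t * Real.sin t) / Real.sqrt (1 + Real.cos t ^ 2)) :
    (∀ t : ℝ,
      deriv a t = Real.cos t * (3 * Real.cos t + Real.cos t ^ 3 + t * Real.sin t) /
        (1 + Real.cos t ^ 2) ^ ((3 : ℝ) / 2) ∧
      deriv θ t = -Real.sin t / (1 + Real.cos t ^ 2)) ∧
    (∀ k : ℤ, deriv θ ((k : ℝ) * Real.pi) = 0 ∧ deriv a ((k : ℝ) * Real.pi) ≠ 0) ∧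
    (¬ ∃ b : ℝ → ℝ, ∀ t : ℝ, deriv a t = b t * deriv θ t) ∧
    (¬ ∃ f : ℝ → ℝ × ℝ, ContDiff ℝ (⊤ : ℕ∞) f ∧ ∀ t : ℝ,
        (deriv f t).1 * Real.cos (θ t) + (deriv f t).2 * Real.sin (θ t) = 0 ∧
        (f t).1 * Real.cos (θ t) + (f t).2 * Real.sin (θ t) = a t) := by
  have hda : ∀ t, deriv a t = Real.cos t * (3 * Real.cos t + Real.cos t ^ 3 + t * Real.sin t) /
      (1 + Real.cos t ^ 2) ^ ((3 : ℝ) / 2) := by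
    intro t; rw [ha]; exact (a_hd t).deriv
  have hdθ : ∀ t, deriv θ t = -Real.sin t / (1 + Real.cos t ^ 2) :=
    theta_deriv θ hθ hcos hsin
  have hkey : ∀ k : ℤ, deriv θ ((k : ℝ) * Real.pi) = 0 ∧ deriv a ((k : ℝ) * Real.pi) ≠ 0 := by
    intro k
    have hsin0 : Real.sin ((k : ℝ) * Real.pi) = 0 := Real.sin_int_mul_pi k
    have hcos1 : Real.cos ((k : ℝ) * Real.pi) ^ 2 = 1 := by
      have := Real.abs_cos_int_mul_pi k
      nlinarith [abs_nonneg (Real.cos ((k : ℝ) * Real.pi)), sq_abs (Real.cos ((k : ℝ) * Real.pi))]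
    constructor
    · rw [hdθ, hsin0]; simp
    · rw [hda, hsin0]
      have hnum : Real.cos ((k : ℝ) * Real.pi) * (3 * Real.cos ((k : ℝ) * Real.pi) +
          Real.cos ((k : ℝ) * Real.pi) ^ 3 + (k : ℝ) * Real.pi * 0) = 4 := by
        nlinarith [hcos1]
      rw [hnum]
      positivity
  have hθ0 : deriv θ 0 = 0 := by
    have := (hkey 0).1; simpa using this
  have ha0 : deriv a 0 ≠ 0 := by
    have := (hkey 0).2; simpa using this
  refine ⟨fun t => ⟨hda t, hdθ t⟩, hkey, ?_, ?_⟩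
  · rintro ⟨b, hb⟩
    exact ha0 (by rw [hb 0, hθ0, mul_zero])
  · rintro ⟨f, hf, hprop⟩
    have hfd : HasDerivAt f (deriv f 0) 0 := ((hf.differentiable (by simp)) 0).hasDerivAt
    have h1 : HasDerivAt (fun t => (f t).1) (deriv f 0).1 0 :=
      (ContinuousLinearMap.fst ℝ ℝ ℝ).hasFDerivAt.comp_hasDerivAt 0 hfd
    have h2 : HasDerivAt (fun t => (f t).2) (deriv f 0).2 0 :=
      (ContinuousLinearMap.snd ℝ ℝ ℝ).hasFDerivAt.comp_hasDerivAt 0 hfd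
    have hθd : HasDerivAt θ (deriv θ 0) 0 := ((hθ.differentiable (by simp)) 0).hasDerivAt
    have hc : HasDerivAt (fun t => Real.cos (θ t)) (-Real.sin (θ 0) * deriv θ 0) 0 :=
      (Real.hasDerivAt_cos (θ 0)).comp 0 hθd
    have hs : HasDerivAt (fun t => Real.sin (θ t)) (Real.cos (θ 0) * deriv θ 0) 0 :=
      (Real.hasDerivAt_sin (θ 0)).comp 0 hθd
    have hF : HasDerivAt (fun t => (f t).1 * Real.cos (θ t) + (f t).2 * Real.sin (θ t))
        ((deriv f 0).1 * Real.cos (θ 0) + (f 0).1 * (-Real.sin (θ 0) * deriv θ 0) +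
          ((deriv f 0).2 * Real.sin (θ 0) + (f 0).2 * (Real.cos (θ 0) * deriv θ 0))) 0 :=
      (h1.mul hc).add (h2.mul hs)
    have hFa : (fun t => (f t).1 * Real.cos (θ t) + (f t).2 * Real.sin (θ t)) = a :=
      funext fun t => (hprop t).2
    rw [hFa] at hF
    apply ha0
    rw [hF.deriv, hθ0]
    linear_combination (hprop 0).1
end

section
/- For the Clairaut line family with ν(t) = (t, -1)/√(t² + 1) and a(t) = -g(t)/√(t² + 1), where g : ℝ → ℝ is C^∞, the Gauss map is non-singular, the unique creator is b(t) = (-g'(t)(t² + 1) + t g(t))/√(t² + 1), and the unique envelope is t ↦ (-g'(t), g(t) - t g'(t)). -/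
open Real

/-- For the Clairaut line family with `(cos θ(t), sin θ(t)) = (t, -1)/√(t²+1)` and
`a(t) = -g(t)/√(t²+1)`: the Gauss map is non-singular, the unique creator is
`b(t) = (-g'(t)(t²+1) + t g(t))/√(t²+1)`, and the unique envelope (the singular
solution of the Clairaut equation) is `t ↦ (-g'(t), g(t) - t g'(t))`. -/
theorem clairaut_envelope
    (g : ℝ → ℝ) (hg : ContDiff ℝ (⊤ : ℕ∞) g)
    (θ a : ℝ → ℝ) (hθ : ContDiff ℝ (⊤ : ℕ∞) θ)
    (hcos : ∀ t, Real.cos (θ t) = t / Real.sqrt (t ^ 2 + 1))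
    (hsin : ∀ t, Real.sin (θ t) = -1 / Real.sqrt (t ^ 2 + 1))
    (ha : a = fun t => -g t / Real.sqrt (t ^ 2 + 1))
    (b : ℝ → ℝ)
    (hb : b = fun t => (-deriv g t * (t ^ 2 + 1) + t * g t) / Real.sqrt (t ^ 2 + 1))
    (f₀ : ℝ → ℝ × ℝ)
    (hf₀ : f₀ = fun t => (-deriv g t, g t - t * deriv g t)) :
    (∀ t : ℝ, deriv θ t ≠ 0) ∧
    (∀ t : ℝ, deriv a t = b t * deriv θ t) ∧
    (∀ c : ℝ → ℝ, (∀ t : ℝ, deriv a t = c t * deriv θ t) → c = b) ∧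
    (ContDiff ℝ (⊤ : ℕ∞) f₀ ∧ ∀ t : ℝ,
      (deriv f₀ t).1 * Real.cos (θ t) + (deriv f₀ t).2 * Real.sin (θ t) = 0 ∧
      (f₀ t).1 * Real.cos (θ t) + (f₀ t).2 * Real.sin (θ t) = a t) ∧
    (∀ f : ℝ → ℝ × ℝ, ContDiff ℝ (⊤ : ℕ∞) f →
      (∀ t : ℝ,
        (deriv f t).1 * Real.cos (θ t) + (deriv f t).2 * Real.sin (θ t) = 0 ∧
        (f t).1 * Real.cos (θ t) + (f t).2 * Real.sin (θ t) = a t) →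
      f = f₀) := by
  have hsq : ∀ t : ℝ, Real.sqrt (t ^ 2 + 1) ^ 2 = t ^ 2 + 1 := fun t =>
    Real.sq_sqrt (by positivity)
  have hspos : ∀ t : ℝ, 0 < Real.sqrt (t ^ 2 + 1) := fun t =>
    Real.sqrt_pos.mpr (by positivity)
  have hsne : ∀ t : ℝ, Real.sqrt (t ^ 2 + 1) ≠ 0 := fun t => (hspos t).ne'
  -- derivative of √(t²+1)
  have hds : ∀ t : ℝ, HasDerivAt (fun t : ℝ => Real.sqrt (t ^ 2 + 1))
      (t / Real.sqrt (t ^ 2 + 1)) t := by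
    intro t
    have h1 : HasDerivAt (fun t : ℝ => t ^ 2 + 1) (2 * t) t := by
      simpa using (hasDerivAt_pow 2 t).add_const 1
    have h2 := (Real.hasDerivAt_sqrt (x := t ^ 2 + 1) (by positivity)).comp t h1
    refine h2.congr_deriv ?_
    field_simp
  -- derivative of t/√(t²+1)
  have hdc : ∀ t : ℝ, HasDerivAt (fun t : ℝ => t / Real.sqrt (t ^ 2 + 1))
      (1 / Real.sqrt (t ^ 2 + 1) ^ 3) t := by
    intro t
    have h := (hasDerivAt_id t).div (hds t) (hsne t)
    refine h.congr_deriv ?_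
    have h2 := hsq t
    field_simp
    simp only [id_eq]
    nlinarith [hsq t, hspos t]
  have hθd : Differentiable ℝ θ := hθ.differentiable (by simp)
  have hgd : Differentiable ℝ g := hg.differentiable (by simp)
  -- deriv θ = 1/(t²+1)
  have hθ' : ∀ t : ℝ, deriv θ t = 1 / (t ^ 2 + 1) := by
    intro t
    have hl : HasDerivAt (fun t => Real.cos (θ t)) (-Real.sin (θ t) * deriv θ t) t :=
      (Real.hasDerivAt_cos (θ t)).comp t (hθd t).hasDerivAt
    have heq : (fun t => Real.cos (θ t)) = fun t : ℝ => t / Real.sqrt (t ^ 2 + 1) :=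
      funext hcos
    rw [heq] at hl
    have key := hl.unique (hdc t)
    rw [hsin t] at key
    -- key : -(-1/√) * θ' = 1/√³
    have hmul : deriv θ t * (t ^ 2 + 1) = 1 := by
      have h3 : deriv θ t / Real.sqrt (t ^ 2 + 1) = 1 / Real.sqrt (t ^ 2 + 1) ^ 3 := by
        rw [← key]; ring
      field_simp at h3
      have h4 : (deriv θ t * (t ^ 2 + 1)) * Real.sqrt (t ^ 2 + 1) =
          1 * Real.sqrt (t ^ 2 + 1) := by
        linear_combination Real.sqrt (t ^ 2 + 1) * h3 - deriv θ t * Real.sqrt (t ^ 2 + 1) * hsq t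
      exact mul_right_cancel₀ (hsne t) h4
    have hpos : (0:ℝ) < t ^ 2 + 1 := by positivity
    field_simp
    linarith [hmul]
  have hθ'ne : ∀ t : ℝ, deriv θ t ≠ 0 := by
    intro t; rw [hθ' t]; positivity
  -- deriv a
  have hda : ∀ t : ℝ, HasDerivAt a
      ((-deriv g t * Real.sqrt (t ^ 2 + 1) - -g t * (t / Real.sqrt (t ^ 2 + 1))) /
        Real.sqrt (t ^ 2 + 1) ^ 2) t := by
    intro t
    rw [ha]
    exact ((hgd t).hasDerivAt.neg).div (hds t) (hsne t)
  have hab : ∀ t : ℝ, deriv a t = b t * deriv θ t := by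
    intro t
    rw [(hda t).deriv, hb, hθ' t]
    field_simp
    linear_combination (-(t * g t)) * hsq t
  refine ⟨hθ'ne, hab, ?_, ?_, ?_⟩
  · intro c hc
    funext t
    have h1 := (hc t).symm.trans (hab t)
    exact mul_right_cancel₀ (hθ'ne t) h1
  · -- existence of the envelope
    have hg' : ContDiff ℝ (⊤ : ℕ∞) (deriv g) := by
      have h := (contDiff_succ_iff_deriv (n := ((⊤ : ℕ∞) : WithTop ℕ∞)) (f := g))
      rw [show (((⊤ : ℕ∞) : WithTop ℕ∞) + 1) = ((⊤ : ℕ∞) : WithTop ℕ∞) from rfl] at h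
      exact (h.mp hg).2.2
    have hg'd : Differentiable ℝ (deriv g) := hg'.differentiable (by simp)
    have hf₀smooth : ContDiff ℝ (⊤ : ℕ∞) f₀ := by
      rw [hf₀]
      exact (hg'.neg).prodMk (hg.sub (contDiff_id.mul hg'))
    refine ⟨hf₀smooth, ?_⟩
    intro t
    have h1 : HasDerivAt (fun t => -deriv g t) (-deriv (deriv g) t) t :=
      (hg'd t).hasDerivAt.neg
    have h2 : HasDerivAt (fun t => g t - t * deriv g t)
        (deriv g t - (1 * deriv g t + t * deriv (deriv g) t)) t :=
      (hgd t).hasDerivAt.sub ((hasDerivAt_id t).mul (hg'd t).hasDerivAt)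
    have hdf : HasDerivAt f₀ (-deriv (deriv g) t,
        deriv g t - (1 * deriv g t + t * deriv (deriv g) t)) t := by
      rw [hf₀]; exact h1.prodMk h2
    rw [hdf.deriv, hf₀, ha, hcos t, hsin t]
    constructor
    · simp only
      field_simp
      ring
    · simp only
      field_simp
      linear_combination
  · -- uniqueness of the envelope
    intro f hf hfprop
    have hfd : Differentiable ℝ f := hf.differentiable (by simp)
    have hcomp : ∀ t : ℝ, HasDerivAt (fun t => (f t).1) (deriv f t).1 t ∧
        HasDerivAt (fun t => (f t).2) (deriv f t).2 t := by
      intro t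
      have h := (hfd t).hasDerivAt
      constructor
      · simpa using (h.hasFDerivAt.fst).hasDerivAt
      · simpa using (h.hasFDerivAt.snd).hasDerivAt
    -- the second equation: -f₁ sin + f₂ cos = b
    have hE2 : ∀ t : ℝ, -(f t).1 * Real.sin (θ t) + (f t).2 * Real.cos (θ t) = b t := by
      intro t
      have hφ : HasDerivAt (fun t => (f t).1 * Real.cos (θ t) + (f t).2 * Real.sin (θ t))
          ((deriv f t).1 * Real.cos (θ t) + (f t).1 * (-Real.sin (θ t) * deriv θ t) +
            ((deriv f t).2 * Real.sin (θ t) + (f t).2 * (Real.cos (θ t) * deriv θ t))) t := by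
        have hc' : HasDerivAt (fun t => Real.cos (θ t)) (-Real.sin (θ t) * deriv θ t) t :=
          (Real.hasDerivAt_cos (θ t)).comp t (hθd t).hasDerivAt
        have hs' : HasDerivAt (fun t => Real.sin (θ t)) (Real.cos (θ t) * deriv θ t) t :=
          (Real.hasDerivAt_sin (θ t)).comp t (hθd t).hasDerivAt
        exact ((hcomp t).1.mul hc').add ((hcomp t).2.mul hs')
      have heq : (fun t => (f t).1 * Real.cos (θ t) + (f t).2 * Real.sin (θ t)) = a :=
        funext fun t => (hfprop t).2
      rw [heq] at hφ
      have hval := hφ.deriv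
      rw [hab t] at hval
      have h0 := (hfprop t).1
      have hmul : (-(f t).1 * Real.sin (θ t) + (f t).2 * Real.cos (θ t)) * deriv θ t =
          b t * deriv θ t := by
        linear_combination -hval - h0
      exact mul_right_cancel₀ (hθ'ne t) hmul
    -- f₀ also satisfies both equations
    have hE2₀ : ∀ t : ℝ, -(f₀ t).1 * Real.sin (θ t) + (f₀ t).2 * Real.cos (θ t) = b t := by
      intro t
      rw [hf₀, hb, hcos t, hsin t]
      simp only
      field_simp
      linear_combination
    have hE1₀ : ∀ t : ℝ, (f₀ t).1 * Real.cos (θ t) + (f₀ t).2 * Real.sin (θ t) = a t := by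
      intro t
      rw [hf₀, ha, hcos t, hsin t]
      simp only
      field_simp
      linear_combination
    funext t
    have e1 : ((f t).1 - (f₀ t).1) * Real.cos (θ t) +
        ((f t).2 - (f₀ t).2) * Real.sin (θ t) = 0 := by
      linear_combination (hfprop t).2 - hE1₀ t
    have e2 : -((f t).1 - (f₀ t).1) * Real.sin (θ t) +
        ((f t).2 - (f₀ t).2) * Real.cos (θ t) = 0 := by
      linear_combination hE2 t - hE2₀ t
    have hpyth : Real.sin (θ t) ^ 2 + Real.cos (θ t) ^ 2 = 1 := Real.sin_sq_add_cos_sq (θ t)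
    have hu : (f t).1 - (f₀ t).1 = 0 := by
      linear_combination Real.cos (θ t) * e1 - Real.sin (θ t) * e2 -
        ((f t).1 - (f₀ t).1) * hpyth
    have hv : (f t).2 - (f₀ t).2 = 0 := by
      linear_combination Real.sin (θ t) * e1 + Real.cos (θ t) * e2 -
        ((f t).2 - (f₀ t).2) * hpyth
    exact Prod.ext (by linarith) (by linarith)
end
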